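/- For every strongly binary tree T and every cut y of T, K̃(T,y) ≤ |LB(y)|, i.e., K̃ is at most the number of clusters induced by the cut. -/
import Mathlib


/-- A strongly binary tree: either a single leaf, or an internal node with an
ordered pair of strongly binary subtrees. -/
inductive SBTree where
  | leaf : SBTree
  | node : SBTree → SBTree → SBTree
deriving DecidableEq

/-- The subtree of `T` sitting at the position described by the path `p`
(`false` = go to the left child, `true` = go to the right child), if it exists.
Positions `p` with `subtreeAt T p ≠ none` are the nodes of `T`; the root is `[]`,
and the parent of a nonroot node `p` is `p.dropLast`. -/
def SBTree.subtreeAt : SBTree → List Bool → Option SBTree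
  | t, [] => some t
  | .leaf, _ :: _ => none
  | .node l r, b :: p => (if b then r else l).subtreeAt p

/-- `p` is a node of `T`. -/
def SBTree.IsNodePos (T : SBTree) (p : List Bool) : Prop := (T.subtreeAt p).isSome

/-- `p` is a leaf of `T`. -/
def SBTree.IsLeafPos (T : SBTree) (p : List Bool) : Prop := T.subtreeAt p = some .leaf

/-- `p` is an internal node of `T`. -/
def SBTree.IsInternalPos (T : SBTree) (p : List Bool) : Prop :=
  ∃ l r, T.subtreeAt p = some (.node l r)

/-- A cut of `T`: an assignment `y` of `{0,1}` (here `Bool`) to the nodes of `T`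
(normalized to `false` outside the tree) such that every leaf is assigned `1` and,
whenever an internal node is assigned `1`, both of its children are assigned `1`. -/
def SBTree.IsCut (T : SBTree) (y : List Bool → Bool) : Prop :=
  (∀ p, ¬ T.IsNodePos p → y p = false) ∧
  (∀ p, T.IsLeafPos p → y p = true) ∧
  (∀ p, T.IsInternalPos p → y p = true →
    y (p ++ [false]) = true ∧ y (p ++ [true]) = true)

/-- The lower boundary `LB(y)` of a cut: the nodes `v` with `y v = 1` such that `v`
is the root or `y (parent v) = 0`; its cardinality is the number of clusters
induced by the cut. -/
def SBTree.LB (T : SBTree) (y : List Bool → Bool) : Set (List Bool) :=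
  {p | T.IsNodePos p ∧ y p = true ∧ (p = [] ∨ y p.dropLast = false)}

/-- The set `T'_y`: internal nodes `v` of `T` such that either `y v = 0`, or
`y v = 1` and (`v` is the root or `y (parent v) = 0`). -/
def SBTree.Tset (T : SBTree) (y : List Bool → Bool) : Set (List Bool) :=
  {p | T.IsInternalPos p ∧
    (y p = false ∨ (y p = true ∧ (p = [] ∨ y p.dropLast = false)))}

/-- `K̃(T,y)`: the number of nodes of `T'_y` having no child in `T'_y`. -/
noncomputable def SBTree.Ktilde (T : SBTree) (y : List Bool → Bool) : ℕ :=
  Set.ncard {p | p ∈ T.Tset y ∧ (p ++ [false]) ∉ T.Tset y ∧ (p ++ [true]) ∉ T.Tset y}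

/-- The number of cherries `s(T)`: internal nodes both of whose children are leaves
(equivalently, the number of pairs of sibling leaves `|L_s(T)|`). -/
def SBTree.cherries : SBTree → ℕ
  | .leaf => 0
  | .node .leaf .leaf => 1
  | .node l r => l.cherries + r.cherries


lemma SBTree.subtreeAt_append (T : SBTree) (p q : List Bool) :
    T.subtreeAt (p ++ q) = (T.subtreeAt p).bind (·.subtreeAt q) := by
  induction p generalizing T with
  | nil => simp [SBTree.subtreeAt]
  | cons b p ih =>
    cases T with
    | leaf => simp [SBTree.subtreeAt]
    | node l r => simp [SBTree.subtreeAt, ih]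

lemma SBTree.nodes_finite (T : SBTree) : {p | T.IsNodePos p}.Finite := by
  induction T with
  | leaf =>
    apply Set.Finite.subset (Set.finite_singleton ([] : List Bool))
    intro p hp
    cases p with
    | nil => rfl
    | cons b q => simp [SBTree.IsNodePos, SBTree.subtreeAt] at hp
  | node l r ihl ihr =>
    apply Set.Finite.subset
      (Set.Finite.insert [] ((ihl.image (List.cons false)).union (ihr.image (List.cons true))))
    intro p hp
    cases p with
    | nil => exact Set.mem_insert _ _
    | cons b q =>
      cases b with
      | false =>
        refine Set.mem_insert_of_mem _ (Or.inl ⟨q, ?_, rfl⟩)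
        simpa [SBTree.IsNodePos, SBTree.subtreeAt] using hp
      | true =>
        refine Set.mem_insert_of_mem _ (Or.inr ⟨q, ?_, rfl⟩)
        simpa [SBTree.IsNodePos, SBTree.subtreeAt] using hp

/-- For every strongly binary tree `T` and every cut `y` of `T`,
`K̃(T,y)` is at most the number of clusters `|LB(y)|` induced by the cut. -/
theorem Ktilde_le_card_LB (T : SBTree) (y : List Bool → Bool) (hy : T.IsCut y) :
    T.Ktilde y ≤ (T.LB y).ncard := by
  obtain ⟨h0, hleaf, hint⟩ := hy
  set S := {p | p ∈ T.Tset y ∧ (p ++ [false]) ∉ T.Tset y ∧ (p ++ [true]) ∉ T.Tset y} with hS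
  have hLBfin : (T.LB y).Finite := (SBTree.nodes_finite T).subset (fun p hp => hp.1)
  -- children of internal nodes:
  have hchild : ∀ p l r (b : Bool), T.subtreeAt p = some (.node l r) →
      T.subtreeAt (p ++ [b]) = some (if b then r else l) := by
    intro p l r b hp
    rw [SBTree.subtreeAt_append, hp]
    cases b <;> simp [SBTree.subtreeAt]
  -- if p ∈ S and y p = false, both children are leaves
  have hleaves : ∀ p ∈ S, y p = false →
      T.IsLeafPos (p ++ [false]) ∧ T.IsLeafPos (p ++ [true]) := by
    intro p hpS hyp
    obtain ⟨⟨⟨l, r, hp⟩, _⟩, hcf, hct⟩ := hpS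
    have key : ∀ (b : Bool) (t : SBTree), T.subtreeAt (p ++ [b]) = some t →
        (p ++ [b]) ∉ T.Tset y → t = .leaf := by
      intro b t ht hnot
      cases t with
      | leaf => rfl
      | node a c =>
        exfalso
        apply hnot
        refine ⟨⟨a, c, ht⟩, ?_⟩
        cases hyc : y (p ++ [b]) with
        | false => exact Or.inl rfl
        | true =>
          refine Or.inr ⟨rfl, Or.inr ?_⟩
          rwa [List.dropLast_concat]
    constructor
    · have := key false l (by simpa using hchild p l r false hp) hcf
      subst this
      simpa [SBTree.IsLeafPos] using hchild p .leaf r false hp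
    · have := key true r (by simpa using hchild p l r true hp) hct
      subst this
      simpa [SBTree.IsLeafPos] using hchild p l .leaf true hp
  set f : List Bool → List Bool := fun p => if y p = true then p else p ++ [false] with hf
  have hmem : ∀ p ∈ S, f p ∈ T.LB y := by
    intro p hpS
    obtain ⟨⟨⟨l, r, hp⟩, hdisj⟩, hcf, hct⟩ := hpS
    cases hyp : y p with
    | true =>
      simp only [hf, hyp, if_pos rfl]
      rcases hdisj with h | ⟨_, h⟩
      · simp [hyp] at h
      · exact ⟨by simp [SBTree.IsNodePos, hp], hyp, h⟩
    | false =>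
      have hfp : f p = p ++ [false] := by simp [hf, hyp]
      rw [hfp]
      have hlf := (hleaves p ⟨⟨⟨l, r, hp⟩, hdisj⟩, hcf, hct⟩ hyp).1
      refine ⟨?_, hleaf _ hlf, Or.inr ?_⟩
      · rw [SBTree.IsNodePos, hlf]; rfl
      · rw [List.dropLast_concat]; exact hyp
  have hinj : Set.InjOn f S := by
    intro p hp q hq hfpq
    simp only [hf] at hfpq
    by_cases hyp : y p = true <;> by_cases hyq : y q = true
    · simpa [hyp, hyq] using hfpq
    · -- p = q ++ [false], but q's children are not in Tset, while p ∈ Tset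
      exfalso
      rw [if_pos hyp, if_neg hyq] at hfpq
      exact hq.2.1 (hfpq ▸ hp.1)
    · exfalso
      rw [if_neg hyp, if_pos hyq] at hfpq
      exact hp.2.1 (hfpq.symm ▸ hq.1)
    · rw [if_neg hyp, if_neg hyq] at hfpq
      exact List.append_cancel_right hfpq
  calc T.Ktilde y = (f '' S).ncard := (Set.ncard_image_of_injOn hinj).symm
    _ ≤ (T.LB y).ncard := Set.ncard_le_ncard (Set.image_subset_iff.mpr hmem) hLBfin
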